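/- arXiv:2311.08743 — 2 statements merged into one kernel-verified Lean document; each statement's English description precedes it below -/
import Mathlib

section
/- Let κ_d denote the number of labeled directed acyclic graphs on d nodes. Then κ_d satisfies the recurrence κ_d = Σ_{i=1}^{d} (−1)^{i+1} · C(d,i) · 2^{i(d−i)} · κ_{d−i}, with κ_0 = 1. In particular κ_1 = 1, κ_2 = 3, κ_3 = 25. -/
/-!
Every DAG on a nonempty vertex set has a sink, so the sets "DAGs in which `v` is a sink" cover
all DAGs and inclusion–exclusion expresses `κ_d` (the term of the empty intersection) through
the numbers of DAGs in which all vertices of a given nonempty set `S` are sinks. Such a DAG is an arbitrary choice of edges from the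
remaining `d - |S|` vertices into `S` together with an arbitrary DAG on the remaining vertices,
so there are `2 ^ (|S| (d - |S|)) κ_{d - |S|}` of them.
-/

/-- The number of labeled directed acyclic graphs on `d` nodes: adjacency functions
`A : Fin d → Fin d → Bool` whose edge relation has no directed cycle. -/
noncomputable def numLabeledDAGs (d : ℕ) : ℕ :=
  Nat.card {A : Fin d → Fin d → Bool //
    ∀ i : Fin d, ¬ Relation.TransGen (fun a b => A a b = true) i i}

open Finset Relation

theorem Relation.TransGen.exists_subtype {α : Type*} {r : α → α → Prop} {p : α → Prop}
    (hp : ∀ a b, r a b → p a) {a b : α} (h : TransGen r a b) (hb : p b) :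
    ∃ ha : p a, TransGen (fun x y : Subtype p => r x y) ⟨a, ha⟩ ⟨b, hb⟩ := by
  induction h with
  | single hab => exact ⟨hp _ _ hab, .single hab⟩
  | tail _ hcb ih =>
    obtain ⟨ha, hac⟩ := ih (hp _ _ hcb)
    exact ⟨ha, hac.tail hcb⟩

section

variable {V W : Type*}

def IsAcyclicAdj (A : V → V → Bool) : Prop :=
  ∀ v, ¬ TransGen (fun a b => A a b = true) v v

def IsSink (A : V → V → Bool) (v : V) : Prop :=
  ∀ w, A v w = false

noncomputable def numDAGs (V : Type*) : ℕ :=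
  Nat.card {A : V → V → Bool // IsAcyclicAdj A}

theorem IsAcyclicAdj.comap {A : V → V → Bool} (hA : IsAcyclicAdj A) (f : W → V) :
    IsAcyclicAdj fun a b => A (f a) (f b) :=
  fun v hv => hA (f v) (TransGen.lift f (fun _ _ h => h) _ _ hv)

theorem numDAGs_congr (e : V ≃ W) : numDAGs V = numDAGs W :=
  Nat.card_congr <| (e.arrowCongr (e.arrowCongr (.refl Bool))).subtypeEquiv fun _ =>
    ⟨fun hA => hA.comap e.symm, fun hA => by simpa using hA.comap e⟩

theorem numDAGs_eq_numLabeledDAGs [Finite V] : numDAGs V = numLabeledDAGs (Nat.card V) :=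
  numDAGs_congr (Finite.equivFin V)

theorem IsAcyclicAdj.exists_isSink [Finite V] [Nonempty V] {A : V → V → Bool}
    (hA : IsAcyclicAdj A) : ∃ v, IsSink A v := by
  let reachedFrom : V → V → Prop := fun a b => TransGen (fun x y => A x y = true) b a
  have : IsStrictOrder V reachedFrom :=
    { irrefl := hA, trans := fun _ _ _ hab hbc => hbc.trans hab }
  obtain ⟨v, -, hv⟩ := (Finite.wellFounded_of_trans_of_irrefl reachedFrom).has_min Set.univ
    ⟨Classical.arbitrary V, trivial⟩
  exact ⟨v, fun w => Bool.not_eq_true _ ▸ fun hvw => hv w trivial (.single hvw)⟩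

theorem isAcyclicAdj_iff_subtype {A : V → V → Bool} {p : V → Prop}
    (hA : ∀ v, ¬ p v → IsSink A v) :
    IsAcyclicAdj A ↔ IsAcyclicAdj fun a b : Subtype p => A a b := by
  refine ⟨fun h => h.comap Subtype.val, fun h v hv => ?_⟩
  have hsource : ∀ a b, A a b = true → p a := fun a b hab => by
    by_contra ha
    simp [hA a ha b] at hab
  obtain ⟨w, hvw, -⟩ := TransGen.head'_iff.1 hv
  obtain ⟨_, hcycle⟩ := hv.exists_subtype hsource (hsource v w hvw)
  exact h _ hcycle

section Sinks

variable [DecidableEq V] (S : Finset V) (C : {v // v ∉ S} → S → Bool)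

def extendAdj (B : {v // v ∉ S} → {v // v ∉ S} → Bool) : V → V → Bool :=
  fun v w =>
    if hv : v ∈ S then false else if hw : w ∈ S then C ⟨v, hv⟩ ⟨w, hw⟩ else B ⟨v, hv⟩ ⟨w, hw⟩

variable (B : {v // v ∉ S} → {v // v ∉ S} → Bool)

theorem isSink_extendAdj {v : V} (hv : v ∈ S) : IsSink (extendAdj S C B) v :=
  fun w => by simp [extendAdj, hv]

@[simp]
theorem extendAdj_apply_notMem_mem (a : {v // v ∉ S}) (s : S) : extendAdj S C B a s = C a s := by
  simp [extendAdj, a.2]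

@[simp]
theorem extendAdj_apply_notMem_notMem (a b : {v // v ∉ S}) : extendAdj S C B a b = B a b := by
  simp [extendAdj, a.2, b.2]

theorem isAcyclicAdj_extendAdj (hB : IsAcyclicAdj B) : IsAcyclicAdj (extendAdj S C B) := by
  rw [isAcyclicAdj_iff_subtype (p := (· ∉ S)) fun v hv => isSink_extendAdj S C B (not_not.1 hv)]
  simpa using hB

def dagsWithSinksEquiv :
    {A : {A : V → V → Bool // IsAcyclicAdj A} // ∀ v ∈ S, IsSink A.1 v} ≃
      ({v // v ∉ S} → S → Bool) × {B : {v // v ∉ S} → {v // v ∉ S} → Bool // IsAcyclicAdj B} where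
  toFun A := (fun a s => A.1.1 a s, ⟨fun a b => A.1.1 a b, A.1.2.comap Subtype.val⟩)
  invFun P := ⟨⟨extendAdj S P.1 P.2.1, isAcyclicAdj_extendAdj S P.1 P.2.1 P.2.2⟩,
    fun _ => isSink_extendAdj S P.1 P.2.1⟩
  left_inv := by
    rintro ⟨⟨A, -⟩, hS⟩
    ext v w
    by_cases hv : v ∈ S
    · simpa [extendAdj, hv] using (hS v hv w).symm
    · by_cases hw : w ∈ S <;> simp [extendAdj, hv, hw]
  right_inv := by
    rintro ⟨C, B, -⟩
    simp

theorem card_dagsWithSinks [Fintype V] :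
    Nat.card {A : {A : V → V → Bool // IsAcyclicAdj A} // ∀ v ∈ S, IsSink A.1 v} =
      2 ^ (#S * (Fintype.card V - #S)) * numLabeledDAGs (Fintype.card V - #S) := by
  have hcompl : Nat.card {v // v ∉ S} = Fintype.card V - #S := by
    rw [Nat.card_eq_fintype_card, Fintype.card_subtype_compl, Fintype.card_coe]
  rw [Nat.card_congr (dagsWithSinksEquiv S), Nat.card_prod, Nat.card_fun, Nat.card_fun,
    Nat.card_eq_fintype_card (α := Bool), Fintype.card_bool, Nat.card_eq_fintype_card (α := S),
    Fintype.card_coe, ← pow_mul, ← hcompl]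
  exact congrArg _ numDAGs_eq_numLabeledDAGs

end Sinks

end

theorem sum_range_choose_mul_numLabeledDAGs_eq_zero {d : ℕ} (hd : d ≠ 0) :
    ∑ i ∈ range (d + 1),
      (-1 : ℤ) ^ i * d.choose i * 2 ^ (i * (d - i)) * numLabeledDAGs (d - i) = 0 := by
  classical
  have : Nonempty (Fin d) := ⟨⟨0, Nat.pos_of_ne_zero hd⟩⟩
  let sinkSet (v : Fin d) : Finset {A : Fin d → Fin d → Bool // IsAcyclicAdj A} :=
    univ.filter fun A => IsSink A.1 v
  have hsinkless : univ.inf (fun v => (sinkSet v)ᶜ) = ∅ := by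
    ext A
    simp [Finset.mem_inf, sinkSet, A.2.exists_isSink]
  have hinter (t : Finset (Fin d)) :
      #(t.inf sinkSet) = 2 ^ (#t * (d - #t)) * numLabeledDAGs (d - #t) := by
    have hcount := card_dagsWithSinks t
    rw [Fintype.card_fin] at hcount
    rw [← Nat.card_eq_finsetCard, ← hcount]
    exact Nat.card_congr (.subtypeEquivRight fun A => by simp [Finset.mem_inf, sinkSet])
  have hIE := inclusion_exclusion_card_inf_compl univ sinkSet
  simp only [hsinkless, hinter, card_empty, Nat.cast_zero] at hIE
  rw [sum_powerset_apply_card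
    (fun k => (-1 : ℤ) ^ k * ↑(2 ^ (k * (d - k)) * numLabeledDAGs (d - k))),
    card_univ, Fintype.card_fin] at hIE
  rw [hIE]
  refine sum_congr rfl fun i _ => ?_
  push_cast
  ring

theorem numLabeledDAGs_zero : numLabeledDAGs 0 = 1 := by
  simp [numLabeledDAGs]

theorem numLabeledDAGs_eq_sum {d : ℕ} (hd : 1 ≤ d) :
    (numLabeledDAGs d : ℤ) = ∑ i ∈ Icc 1 d,
      (-1 : ℤ) ^ (i + 1) * d.choose i * 2 ^ (i * (d - i)) * numLabeledDAGs (d - i) := by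
  have h := sum_range_choose_mul_numLabeledDAGs_eq_zero (d := d) (by omega)
  rw [range_eq_Ico, sum_eq_sum_Ico_succ_bot (by omega), Ico_add_one_right_eq_Icc] at h
  simp only [pow_succ, mul_neg_one, neg_mul, sum_neg_distrib]
  simpa [add_eq_zero_iff_eq_neg] using h

/-- Robinson's recurrence for the number `κ_d` of labeled DAGs on `d` nodes:
`κ_d = Σ_{i=1}^{d} (−1)^{i+1} C(d,i) 2^{i(d−i)} κ_{d−i}`, with `κ_0 = 1`;
in particular `κ_1 = 1`, `κ_2 = 3`, `κ_3 = 25`. -/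
theorem numLabeledDAGs_recurrence :
    numLabeledDAGs 0 = 1 ∧
    (∀ d : ℕ, 1 ≤ d →
      (numLabeledDAGs d : ℤ) =
        ∑ i ∈ Finset.Icc 1 d,
          (-1 : ℤ) ^ (i + 1) * (d.choose i) * 2 ^ (i * (d - i)) *
            (numLabeledDAGs (d - i) : ℤ)) ∧
    numLabeledDAGs 1 = 1 ∧ numLabeledDAGs 2 = 3 ∧ numLabeledDAGs 3 = 25 := by
  have h1 : numLabeledDAGs 1 = 1 := by
    zify
    simp [numLabeledDAGs_eq_sum, numLabeledDAGs_zero]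
  have h2 : numLabeledDAGs 2 = 3 := by
    zify
    simp [numLabeledDAGs_eq_sum, sum_Icc_succ_top, numLabeledDAGs_zero, h1]
  have h3 : numLabeledDAGs 3 = 25 := by
    zify
    simp [numLabeledDAGs_eq_sum, sum_Icc_succ_top, numLabeledDAGs_zero, h1, h2]
  exact ⟨numLabeledDAGs_zero, fun _ => numLabeledDAGs_eq_sum, h1, h2, h3⟩
end

section
/- Meek's orientation Rule 1 is sound: in a partially directed graph whose every consistent DAG extension has exactly the given v-structures, if X → Y is directed, Y − Z is undirected, and X and Z are non-adjacent, then Y − Z must be oriented Y → Z, since orienting Z → Y would create a new v-structure X → Y ← Z. -/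
/-- Soundness of Meek's orientation Rule 1: let `D` be the directed part of a partially
directed graph and `E` a consistent DAG extension (`E` contains `D`, is acyclic, and
creates no new v-structure: every collider `a → c ← b` of `E` with `a, b` non-adjacent in
`E` is already directed in `D`). If `X → Y` is directed in `D`, the edge `Y − Z` is
undirected (so `E` orients it one way or the other, and neither direction is in `D`), and
`X` and `Z` are non-adjacent, then `E` must orient the edge as `Y → Z`: orienting it
`Z → Y` would create a new v-structure `X → Y ← Z`. -/
theorem meek_rule_one_sound {V : Type*} (D E : V → V → Prop)
    (hDE : ∀ a b, D a b → E a b)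
    (hacyclic : ∀ v, ¬ Relation.TransGen E v v)
    (hnoNewVStruct : ∀ a b c, a ≠ b → E a c → E b c → ¬ (E a b ∨ E b a) →
      D a c ∧ D b c)
    (X Y Z : V) (hXZ : X ≠ Z)
    (hXY : D X Y)
    (hundirected : E Y Z ∨ E Z Y) (hD_undir : ¬ D Y Z ∧ ¬ D Z Y)
    (hnonadj : ¬ E X Z ∧ ¬ E Z X) :
    E Y Z ∧ ¬ E Z Y := by
  have hZY : ¬ E Z Y := fun h =>
    hD_undir.2 (hnoNewVStruct X Z Y hXZ (hDE _ _ hXY) h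
      (fun hc => hc.elim hnonadj.1 hnonadj.2)).2
  exact ⟨hundirected.resolve_right hZY, hZY⟩
end
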